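/- Let π be any policy such that (i) for every stage t ≥ 1 and every s ∈ S, a ∈ A(s) with d_t(s,a) > 0, one has x*_s = Σ_{s'∈S} P(s,a,s') · x*_{s'}, and (ii) ξ^π(s,a) < ∞ for every s ∈ S_r and a ∈ A(s). Then Pr^π(◇B) = x*_{s0}; that is, any policy that uses only actions conserving the optimal reachability probabilities and has finite expected residence times in all state–action pairs of S_r maximizes the probability of reaching B. -/

import Mathlib

open scoped ENNReal

section

variable {S A : Type} [Fintype S] [Fintype A] [DecidableEq S] [DecidableEq A]

/-- A policy: a sequence of decision rules, each supported on the available actions. -/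
def IsPolicy (avail : S → Finset A) (π : ℕ → S → A → ℝ) : Prop :=
  ∀ t s, (∀ a, 0 ≤ π t s a) ∧ (∀ a, a ∉ avail s → π t s a = 0) ∧
    (∑ a ∈ avail s, π t s a) = 1

/-- A stationary policy uses the same decision rule at every stage. -/
def IsStationaryPolicy (π : ℕ → S → A → ℝ) : Prop := ∀ t, π t = π 0

/-- Occupancy measures: `occ P avail init π t s a` is `μ^π_{t+1}(s,a)` (stages indexed from 1). -/
def occ (P : S → A → S → ℝ) (avail : S → Finset A) (init : S)
    (π : ℕ → S → A → ℝ) : ℕ → S → A → ℝ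
  | 0 => fun s a => if s = init then π 0 s a else 0
  | t + 1 => fun s' a' =>
      π (t + 1) s' a' * ∑ s : S, ∑ a ∈ avail s, P s a s' * occ P avail init π t s a

/-- Expected residence time `ξ^π(s,a) ∈ [0,∞]`. -/
noncomputable def resTime (P : S → A → S → ℝ) (avail : S → Finset A) (init : S)
    (π : ℕ → S → A → ℝ) (s : S) (a : A) : ℝ≥0∞ :=
  ∑' t : ℕ, ENNReal.ofReal (occ P avail init π t s a)

/-- Probability of reaching the absorbing set `B`. -/
noncomputable def reachProb (P : S → A → S → ℝ) (avail : S → Finset A) (B : Finset S)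
    (init : S) (π : ℕ → S → A → ℝ) : ℝ≥0∞ :=
  ⨆ t : ℕ, ∑ s ∈ B, ∑ a ∈ avail s, ENNReal.ofReal (occ P avail init π t s a)

/-- `x*_s`: optimal probability of reaching `B` starting from `s`. -/
noncomputable def xstar (P : S → A → S → ℝ) (avail : S → Finset A) (B : Finset S)
    (s : S) : ℝ≥0∞ :=
  ⨆ π : {π : ℕ → S → A → ℝ // IsPolicy avail π}, reachProb P avail B s π.1

/-- A state is absorbing if every available action loops on it with probability 1. -/
def Absorbing (P : S → A → S → ℝ) (avail : S → Finset A) (s : S) : Prop :=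
  ∀ a ∈ avail s, P s a s = 1

/-- Expected total cost `f_c(π) ∈ [0,∞]`. -/
noncomputable def totalCost (P : S → A → S → ℝ) (avail : S → Finset A) (init : S)
    (c : S → A → ℝ) (π : ℕ → S → A → ℝ) : ℝ≥0∞ :=
  ∑ s : S, ∑ a ∈ avail s, resTime P avail init π s a * ENNReal.ofReal (c s a)

/-! Every action a conserving policy plays is harmonic for `x*`, so the expectation
`∑ μ_t(s,a) x*_s` of `x*` under the occupancy measures of `π` equals `x*_{s0}` at every stage.
As `x* = 1` on `B`, this expectation is the mass `μ_t` puts on `B` plus a remainder over the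
states outside `B`; there `x*` vanishes or the residence time is finite, which forces
`μ_t(s,a) → 0`. So the mass on `B` tends to `x*_{s0}`, giving `Pr^π(◇B) ≥ x*_{s0}`; the reverse
inequality holds because `x*` is a supremum over all policies. -/

open Filter Topology

lemma ENNReal.toReal_sum_ofReal_mul {ι : Type*} (s : Finset ι) {p : ι → ℝ} {x : ι → ℝ≥0∞}
    (hp : ∀ i ∈ s, 0 ≤ p i) (hx : ∀ i ∈ s, x i ≠ ⊤) :
    (∑ i ∈ s, ENNReal.ofReal (p i) * x i).toReal = ∑ i ∈ s, p i * (x i).toReal := by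
  rw [ENNReal.toReal_sum fun i hi => ENNReal.mul_ne_top ENNReal.ofReal_ne_top (hx i hi)]
  exact Finset.sum_congr rfl fun i hi => by
    rw [ENNReal.toReal_mul, ENNReal.toReal_ofReal (hp i hi)]

section

omit [Fintype A] [DecidableEq A]

def IsHarmonicAlong (P : S → A → S → ℝ) (avail : S → Finset A) (π : ℕ → S → A → ℝ)
    (y : S → ℝ) : Prop :=
  ∀ t s, ∀ a ∈ avail s, 0 < π t s a → y s = ∑ s', P s a s' * y s'

variable {P : S → A → S → ℝ} {avail : S → Finset A} {init : S} {π : ℕ → S → A → ℝ}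

lemma occ_nonneg (hπ : IsPolicy avail π) (hP0 : ∀ s a s', 0 ≤ P s a s') (t : ℕ) (s : S) (a : A) :
    0 ≤ occ P avail init π t s a := by
  induction t generalizing s a with
  | zero =>
    by_cases hs : s = init
    · simpa [occ, hs] using (hπ 0 init).1 a
    · simp [occ, hs]
  | succ t ih =>
    exact mul_nonneg ((hπ _ _).1 a) (Finset.sum_nonneg fun _ _ =>
      Finset.sum_nonneg fun _ _ => mul_nonneg (hP0 _ _ _) (ih _ _))

lemma occ_eq_zero_of_eq_zero {t : ℕ} {s : S} {a : A} (h : π t s a = 0) :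
    occ P avail init π t s a = 0 := by
  cases t <;> simp [occ, h]

lemma sum_occ_zero_mul (hπ : IsPolicy avail π) (y : S → ℝ) :
    ∑ s, ∑ a ∈ avail s, occ P avail init π 0 s a * y s = y init := by
  rw [Finset.sum_eq_single init (fun s _ hs => by simp [occ, hs]) (by simp)]
  simp [occ, ← Finset.sum_mul, (hπ 0 init).2.2]

lemma sum_occ_succ_mul (hπ : IsPolicy avail π) (y : S → ℝ) (t : ℕ) :
    ∑ s', ∑ a' ∈ avail s', occ P avail init π (t + 1) s' a' * y s' =
      ∑ s, ∑ a ∈ avail s, occ P avail init π t s a * ∑ s', P s a s' * y s' := by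
  calc ∑ s', ∑ a' ∈ avail s', occ P avail init π (t + 1) s' a' * y s'
      = ∑ s', (∑ s, ∑ a ∈ avail s, P s a s' * occ P avail init π t s a) * y s' := by
        refine Finset.sum_congr rfl fun s' _ => ?_
        simp only [occ, ← Finset.sum_mul, (hπ (t + 1) s').2.2, one_mul]
    _ = ∑ s, ∑ a ∈ avail s, occ P avail init π t s a * ∑ s', P s a s' * y s' := by
        simp only [Finset.sum_mul, Finset.mul_sum]
        rw [Finset.sum_comm]
        refine Finset.sum_congr rfl fun s _ => ?_
        rw [Finset.sum_comm]
        exact Finset.sum_congr rfl fun a _ => Finset.sum_congr rfl fun s' _ => by ring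

lemma sum_occ_mul_eq_of_isHarmonicAlong (hπ : IsPolicy avail π) {y : S → ℝ}
    (hy : IsHarmonicAlong P avail π y) (t : ℕ) :
    ∑ s, ∑ a ∈ avail s, occ P avail init π t s a * y s = y init := by
  induction t with
  | zero => exact sum_occ_zero_mul hπ y
  | succ t ih =>
    rw [sum_occ_succ_mul hπ, ← ih]
    refine Finset.sum_congr rfl fun s _ => Finset.sum_congr rfl fun a ha => ?_
    by_cases hπ0 : π t s a = 0
    · simp [occ_eq_zero_of_eq_zero hπ0]
    · rw [← hy t s a ha (lt_of_le_of_ne ((hπ t s).1 a) (Ne.symm hπ0))]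

lemma sum_occ_eq_one (hπ : IsPolicy avail π) (hP1 : ∀ s, ∀ a ∈ avail s, ∑ s', P s a s' = 1)
    (t : ℕ) : ∑ s, ∑ a ∈ avail s, occ P avail init π t s a = 1 := by
  simpa using sum_occ_mul_eq_of_isHarmonicAlong (init := init) (y := fun _ => 1) hπ
    (fun _ s a ha _ => by simp [hP1 s a ha]) t

lemma reachProb_eq_iSup_ofReal (hπ : IsPolicy avail π) (hP0 : ∀ s a s', 0 ≤ P s a s')
    (B : Finset S) : reachProb P avail B init π =
      ⨆ t, ENNReal.ofReal (∑ s ∈ B, ∑ a ∈ avail s, occ P avail init π t s a) := by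
  refine iSup_congr fun t => ?_
  have hocc := occ_nonneg (init := init) hπ hP0 t
  rw [ENNReal.ofReal_sum_of_nonneg fun s _ => Finset.sum_nonneg fun a _ => hocc s a]
  exact Finset.sum_congr rfl fun s _ => (ENNReal.ofReal_sum_of_nonneg fun a _ => hocc s a).symm

lemma ofReal_le_reachProb_of_tendsto (hπ : IsPolicy avail π) (hP0 : ∀ s a s', 0 ≤ P s a s')
    {B : Finset S} {c : ℝ}
    (h : Tendsto (fun t => ∑ s ∈ B, ∑ a ∈ avail s, occ P avail init π t s a) atTop (𝓝 c)) :
    ENNReal.ofReal c ≤ reachProb P avail B init π := by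
  rw [reachProb_eq_iSup_ofReal hπ hP0]
  exact le_of_tendsto' ((ENNReal.continuous_ofReal.tendsto c).comp h) fun t =>
    le_iSup (fun t => ENNReal.ofReal (∑ s ∈ B, ∑ a ∈ avail s, occ P avail init π t s a)) t

lemma reachProb_le_one (hπ : IsPolicy avail π) (hP0 : ∀ s a s', 0 ≤ P s a s')
    (hP1 : ∀ s, ∀ a ∈ avail s, ∑ s', P s a s' = 1) (B : Finset S) :
    reachProb P avail B init π ≤ 1 := by
  rw [reachProb_eq_iSup_ofReal hπ hP0, ← ENNReal.ofReal_one]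
  refine iSup_le fun t => ENNReal.ofReal_le_ofReal ?_
  rw [← sum_occ_eq_one (init := init) hπ hP1 t]
  exact Finset.sum_le_sum_of_subset_of_nonneg (Finset.subset_univ B) fun s _ _ =>
    Finset.sum_nonneg fun a _ => occ_nonneg hπ hP0 t s a

lemma one_le_reachProb_of_mem (hπ : IsPolicy avail π) (hP0 : ∀ s a s', 0 ≤ P s a s')
    {B : Finset S} {s : S} (hs : s ∈ B) : 1 ≤ reachProb P avail B s π := by
  rw [reachProb_eq_iSup_ofReal hπ hP0, ← ENNReal.ofReal_one]
  refine le_iSup_of_le 0 (ENNReal.ofReal_le_ofReal ?_)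
  calc (1 : ℝ) = ∑ a ∈ avail s, occ P avail s π 0 s a := by simp [occ, (hπ 0 s).2.2]
    _ ≤ ∑ s' ∈ B, ∑ a ∈ avail s', occ P avail s π 0 s' a :=
      Finset.single_le_sum (f := fun s' => ∑ a ∈ avail s', occ P avail s π 0 s' a)
        (fun s' _ => Finset.sum_nonneg fun a _ => occ_nonneg hπ hP0 0 s' a) hs

lemma reachProb_le_xstar (hπ : IsPolicy avail π) (B : Finset S) (s : S) :
    reachProb P avail B s π ≤ xstar P avail B s :=
  le_iSup (fun π' : {π : ℕ → S → A → ℝ // IsPolicy avail π} => reachProb P avail B s π'.1)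
    ⟨π, hπ⟩

lemma xstar_le_one (hP0 : ∀ s a s', 0 ≤ P s a s')
    (hP1 : ∀ s, ∀ a ∈ avail s, ∑ s', P s a s' = 1) (B : Finset S) (s : S) :
    xstar P avail B s ≤ 1 :=
  iSup_le fun π' => reachProb_le_one π'.2 hP0 hP1 B

lemma xstar_eq_one_of_mem (hπ : IsPolicy avail π) (hP0 : ∀ s a s', 0 ≤ P s a s')
    (hP1 : ∀ s, ∀ a ∈ avail s, ∑ s', P s a s' = 1) {B : Finset S} {s : S} (hs : s ∈ B) :
    xstar P avail B s = 1 :=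
  (xstar_le_one hP0 hP1 B s).antisymm
    ((one_le_reachProb_of_mem hπ hP0 hs).trans (reachProb_le_xstar hπ B s))

lemma tendsto_occ_of_resTime_ne_top (hπ : IsPolicy avail π) (hP0 : ∀ s a s', 0 ≤ P s a s')
    {s : S} {a : A} (h : resTime P avail init π s a ≠ ⊤) :
    Tendsto (fun t => occ P avail init π t s a) atTop (𝓝 0) := by
  have hsum := ENNReal.summable_toReal (f := fun t => ENNReal.ofReal (occ P avail init π t s a)) h
  simp only [ENNReal.toReal_ofReal (occ_nonneg hπ hP0 _ s a)] at hsum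
  exact hsum.tendsto_atTop_zero

lemma tendsto_sum_occ_of_isHarmonicAlong (hπ : IsPolicy avail π) {B : Finset S} {y : S → ℝ}
    (hy : IsHarmonicAlong P avail π y)
    (hyB : ∀ s ∈ B, y s = 1)
    (hvanish : ∀ s ∉ B, y s ≠ 0 → ∀ a ∈ avail s,
      Tendsto (fun t => occ P avail init π t s a) atTop (𝓝 0)) :
    Tendsto (fun t => ∑ s ∈ B, ∑ a ∈ avail s, occ P avail init π t s a) atTop (𝓝 (y init)) := by
  have hsplit : ∀ t, ∑ s ∈ B, ∑ a ∈ avail s, occ P avail init π t s a =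
      y init - ∑ s ∈ Bᶜ, ∑ a ∈ avail s, occ P avail init π t s a * y s := by
    intro t
    rw [← sum_occ_mul_eq_of_isHarmonicAlong hπ hy t, ← Finset.sum_add_sum_compl B, add_sub_cancel_right]
    exact Finset.sum_congr rfl fun s hs => by simp [hyB s hs]
  have hrest : Tendsto (fun t => ∑ s ∈ Bᶜ, ∑ a ∈ avail s, occ P avail init π t s a * y s)
      atTop (𝓝 0) := by
    rw [← Finset.sum_const_zero (s := Bᶜ)]
    refine tendsto_finsetSum _ fun s hs => ?_
    rw [← Finset.sum_const_zero (s := avail s)]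
    refine tendsto_finsetSum _ fun a ha => ?_
    by_cases hys : y s = 0
    · simp [hys]
    · simpa using (hvanish s (Finset.mem_compl.mp hs) hys a ha).mul_const (y s)
  have hlim := (tendsto_const_nhds (x := y init)).sub hrest
  rw [sub_zero] at hlim
  exact hlim.congr fun t => (hsplit t).symm

end

theorem conserving_policy_with_finite_residence_is_optimal_general
    (P : S → A → S → ℝ) (avail : S → Finset A) (s0 : S) (B : Finset S)
    (hP0 : ∀ s a s', 0 ≤ P s a s')
    (hP1 : ∀ s, ∀ a ∈ avail s, (∑ s' : S, P s a s') = 1)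
    (π : ℕ → S → A → ℝ) (hπ : IsPolicy avail π)
    (hcons : ∀ t s, ∀ a ∈ avail s, 0 < π t s a →
      xstar P avail B s = ∑ s' : S, ENNReal.ofReal (P s a s') * xstar P avail B s')
    (hfin : ∀ s, s ∉ B → xstar P avail B s ≠ 0 → ∀ a ∈ avail s,
      resTime P avail s0 π s a < ⊤) :
    reachProb P avail B s0 π = xstar P avail B s0 := by
  have hx_ne_top : ∀ s, xstar P avail B s ≠ ⊤ := fun s =>
    ((xstar_le_one hP0 hP1 B s).trans_lt ENNReal.one_lt_top).ne
  set y : S → ℝ := fun s => (xstar P avail B s).toReal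
  have hy : IsHarmonicAlong P avail π y := fun t s a ha hpos => by
    simp only [y]
    rw [hcons t s a ha hpos,
      ENNReal.toReal_sum_ofReal_mul _ (fun s' _ => hP0 s a s') (fun s' _ => hx_ne_top s')]
  have hyB : ∀ s ∈ B, y s = 1 := fun s hs => by simp [y, xstar_eq_one_of_mem hπ hP0 hP1 hs]
  have hvanish : ∀ s ∉ B, y s ≠ 0 → ∀ a ∈ avail s,
      Tendsto (fun t => occ P avail s0 π t s a) atTop (𝓝 0) := fun s hs hys a ha =>
    tendsto_occ_of_resTime_ne_top hπ hP0
      (hfin s hs (fun hx => hys (by simp [y, hx])) a ha).ne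
  refine (reachProb_le_xstar hπ B s0).antisymm ?_
  rw [← ENNReal.ofReal_toReal (hx_ne_top s0)]
  exact ofReal_le_reachProb_of_tendsto hπ hP0 (tendsto_sum_occ_of_isHarmonicAlong hπ hy hyB hvanish)

/-- Any policy that uses only actions conserving the optimal reachability probabilities and
whose expected residence times in all state–action pairs of `S_r` are finite maximizes the
probability of reaching `B`: `Pr^π(◇B) = x*_{s0}`. -/
theorem conserving_policy_with_finite_residence_is_optimal
    (P : S → A → S → ℝ) (avail : S → Finset A) (s0 : S) (B : Finset S)
    (havail : ∀ s, (avail s).Nonempty)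
    (hP0 : ∀ s a s', 0 ≤ P s a s')
    (hP1 : ∀ s, ∀ a ∈ avail s, (∑ s' : S, P s a s') = 1)
    (habs : ∀ s : S, (s ∈ B ∨ xstar P avail B s = 0) → Absorbing P avail s)
    (hs0B : s0 ∉ B) (hs0r : xstar P avail B s0 ≠ 0)
    (π : ℕ → S → A → ℝ) (hπ : IsPolicy avail π)
    (hcons : ∀ t s, ∀ a ∈ avail s, 0 < π t s a →
      xstar P avail B s = ∑ s' : S, ENNReal.ofReal (P s a s') * xstar P avail B s')
    (hfin : ∀ s, s ∉ B → xstar P avail B s ≠ 0 → ∀ a ∈ avail s,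
      resTime P avail s0 π s a < ⊤) :
    reachProb P avail B s0 π = xstar P avail B s0 :=
  conserving_policy_with_finite_residence_is_optimal_general P avail s0 B hP0 hP1 π hπ hcons hfin

end
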